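/- Let u₁ denote the unique solution of sin u = u·cos u in (π, 3π/2). Let L > 0 and k > 0 satisfy 2kL ≤ u₁. Then the map Δk ↦ ∫_0^L cos(Δk·x) dx is strictly decreasing on the interval [0, 2k]. In particular, under the cell-length condition L ≤ u₁/(2k), the integrated absorption response of a single target with Δφ = 0 is a monotonic (hence unambiguous) function of the spatial frequency Δk on its admissible nonnegative range. -/

import Mathlib

/-!
For `t ≠ 0` the integral equals `sin (t L) / t`, so in all cases it is `L · sinc (t L)`, and the
claim reduces to `sinc` being strictly decreasing on `[0, u₁]`. Since
`sinc' u = -(sin u - u cos u) / u²` and `(sin u - u cos u)' = u sin u`, the numerator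
`sin u - u cos u` increases from `0` on `[0, π]` and decreases on `[π, 3π/2]` down to its value
`0` at the root `u₁`, so it is positive on `(0, u₁)`.
-/

open Real Set

namespace Real

lemma hasDerivAt_sin_sub_mul_cos (x : ℝ) :
    HasDerivAt (fun u => sin u - u * cos u) (x * sin x) x :=
  ((hasDerivAt_sin x).sub ((hasDerivAt_id' x).mul (hasDerivAt_cos x))).congr_deriv (by ring)

lemma continuous_sin_sub_mul_cos : Continuous fun u => sin u - u * cos u := by
  fun_prop

lemma strictMonoOn_sin_sub_mul_cos : StrictMonoOn (fun u => sin u - u * cos u) (Icc 0 π) := by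
  refine strictMonoOn_of_deriv_pos (convex_Icc _ _) continuous_sin_sub_mul_cos.continuousOn ?_
  intro x hx
  rw [interior_Icc] at hx
  rw [(hasDerivAt_sin_sub_mul_cos x).deriv]
  exact mul_pos hx.1 (sin_pos_of_pos_of_lt_pi hx.1 hx.2)

lemma strictAntiOn_sin_sub_mul_cos :
    StrictAntiOn (fun u => sin u - u * cos u) (Icc π (3 * π / 2)) := by
  refine strictAntiOn_of_deriv_neg (convex_Icc _ _) continuous_sin_sub_mul_cos.continuousOn ?_
  intro x hx
  rw [interior_Icc] at hx
  rw [(hasDerivAt_sin_sub_mul_cos x).deriv, ← sin_sub_two_pi]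
  exact mul_neg_of_pos_of_neg (pi_pos.trans hx.1)
    (sin_neg_of_neg_of_neg_pi_lt (by linarith [hx.2, pi_pos]) (by linarith [hx.1]))

lemma sin_sub_mul_cos_pos {u u₁ : ℝ} (hu : 0 < u) (huu₁ : u < u₁) (hu₁ : u₁ ≤ 3 * π / 2)
    (hroot : u₁ * cos u₁ ≤ sin u₁) : 0 < sin u - u * cos u := by
  rcases le_or_gt u π with huπ | hπu
  · simpa using strictMonoOn_sin_sub_mul_cos ⟨le_rfl, pi_pos.le⟩ ⟨hu.le, huπ⟩ hu
  · have := strictAntiOn_sin_sub_mul_cos ⟨hπu.le, (huu₁.trans_le hu₁).le⟩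
      ⟨hπu.trans huu₁ |>.le, hu₁⟩ huu₁
    linarith

lemma hasDerivAt_sinc_of_ne_zero {x : ℝ} (hx : x ≠ 0) :
    HasDerivAt sinc (-(sin x - x * cos x) / x ^ 2) x := by
  have hquot := ((hasDerivAt_sin x).div (hasDerivAt_id' x) hx).congr_deriv
    (show _ = -(sin x - x * cos x) / x ^ 2 by ring)
  refine hquot.congr_of_eventuallyEq ?_
  filter_upwards [isOpen_ne.mem_nhds hx] with u hu
  exact sinc_of_ne_zero hu

lemma strictAntiOn_sinc {u₁ : ℝ} (hu₁ : u₁ ≤ 3 * π / 2) (hroot : u₁ * cos u₁ ≤ sin u₁) :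
    StrictAntiOn sinc (Icc 0 u₁) := by
  refine strictAntiOn_of_deriv_neg (convex_Icc _ _) continuous_sinc.continuousOn ?_
  intro x hx
  rw [interior_Icc] at hx
  rw [(hasDerivAt_sinc_of_ne_zero hx.1.ne').deriv, neg_div, neg_lt_zero]
  exact div_pos (sin_sub_mul_cos_pos hx.1 hx.2 hu₁ hroot) (pow_pos hx.1 2)

lemma integral_cos_mul (t L : ℝ) : ∫ x in (0 : ℝ)..L, cos (t * x) = L * sinc (t * L) := by
  rcases eq_or_ne t 0 with rfl | ht
  · simp
  rcases eq_or_ne L 0 with rfl | hL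
  · simp
  rw [intervalIntegral.integral_comp_mul_left _ ht, integral_cos,
    sinc_of_ne_zero (mul_ne_zero ht hL)]
  simp only [mul_zero, sin_zero, sub_zero, smul_eq_mul]
  field_simp

end Real

theorem integrated_power_monotone_general
    (u₁ : ℝ) (hu₁ : u₁ ∈ Set.Ioo Real.pi (3 * Real.pi / 2))
    (hroot : Real.sin u₁ = u₁ * Real.cos u₁)
    (L k : ℝ) (hL : 0 < L)
    (hcell : 2 * k * L ≤ u₁) :
    StrictAntiOn (fun Δk : ℝ => ∫ x in (0:ℝ)..L, Real.cos (Δk * x))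
      (Set.Icc 0 (2 * k)) := by
  have hsinc := strictAntiOn_sinc hu₁.2.le hroot.ge
  intro a ha b hb hab
  have hbL : b * L ≤ u₁ := (mul_le_mul_of_nonneg_right hb.2 hL.le).trans hcell
  have haL : a * L ≤ u₁ := (mul_le_mul_of_nonneg_right hab.le hL.le).trans hbL
  simp only [integral_cos_mul]
  exact mul_lt_mul_of_pos_left (hsinc ⟨mul_nonneg ha.1 hL.le, haL⟩ ⟨mul_nonneg hb.1 hL.le, hbL⟩
    (mul_lt_mul_of_pos_right hab hL)) hL

/-- Under the cell-length condition `2kL ≤ u₁`, the integrated absorption response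
`Δk ↦ ∫₀ᴸ cos(Δk·x) dx` is strictly decreasing on `[0, 2k]`, hence unambiguous. -/
theorem integrated_power_monotone
    (u₁ : ℝ) (hu₁ : u₁ ∈ Set.Ioo Real.pi (3 * Real.pi / 2))
    (hroot : Real.sin u₁ = u₁ * Real.cos u₁)
    (L k : ℝ) (hL : 0 < L) (hk : 0 < k)
    (hcell : 2 * k * L ≤ u₁) :
    StrictAntiOn (fun Δk : ℝ => ∫ x in (0:ℝ)..L, Real.cos (Δk * x))
      (Set.Icc 0 (2 * k)) :=
  integrated_power_monotone_general u₁ hu₁ hroot L k hL hcell
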